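/- arXiv:1904.05213 — 3 statements merged into one kernel-verified Lean document; each statement's English description precedes it below -/
import Mathlib

section
/- Let q be a prime power and let k, m, l be positive integers with k ≥ m + l. Let V be a k-dimensional vector space over F_q and let L be a fixed (l−1)-dimensional subspace of V. Then the number of (m+1)-element sets {U_1, U_2, …, U_{m+1}} of l-dimensional subspaces of V, each containing L, such that dim(U_1 + U_2 + ⋯ + U_{m+1}) = m + l, equals (q^{m(m+1)/2}/(m+1)!) · ∏_{i=0}^{m} (q^{k−l+1−i} − 1)/(q − 1). -/
/-!
Passing to `V ⧸ L` turns the `l`-dimensional subspaces containing `L` into lines, and the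
condition on the sum into linear independence of these `m + 1` lines. Choosing an ordering of
such a set of lines and a nonzero vector on each line gives every linearly independent
`(m + 1)`-tuple in `V ⧸ L` exactly once, so the number of sets times `(m + 1)! (q - 1) ^ (m + 1)`
is the number of those tuples, `∏ i < m + 1, (q ^ (k - l + 1) - q ^ i)`.
-/

open Finset Module Nat Submodule

theorem Finset.card_eq_card_mul_of_card_fiber {ι M : Type*} [DecidableEq M] {f : ι → M}
    {s : Finset ι} {t : Finset M} {k : ℕ} (H : (s : Set ι).MapsTo f t)
    (hk : ∀ b ∈ t, #{a ∈ s | f a = b} = k) : #s = #t * k := by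
  rw [card_eq_sum_card_fiberwise H, sum_congr rfl hk, sum_const, smul_eq_mul]

theorem Nat.prod_range_pow_sub_pow (q n c : ℕ) (hc : c ≤ n) :
    ∏ i ∈ range c, (q ^ n - q ^ i) =
      q ^ (c * (c - 1) / 2) * ∏ i ∈ range c, (q ^ (n - i) - 1) := by
  have hfactor : ∀ i ∈ range c, q ^ n - q ^ i = q ^ i * (q ^ (n - i) - 1) := fun i hi => by
    rw [Nat.mul_sub, mul_one, ← pow_add, Nat.add_sub_of_le (by simp at hi; omega)]
  rw [prod_congr rfl hfactor, prod_mul_distrib, prod_pow_eq_pow_sum, sum_range_id]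

section Combinatorics

variable {ι α β : Type*} [Fintype ι] [DecidableEq ι] [Fintype α] [DecidableEq α]

theorem card_filter_image_univ_eq {t : Finset α} (ht : #t = Fintype.card ι) :
    #{u : ι → α | univ.image u = t} = (Fintype.card ι)! := by
  have e : {u : ι → α // univ.image u = t} ≃ (ι ↪ t) :=
    { toFun := fun u =>
        ⟨fun i => ⟨u.1 i, (Finset.ext_iff.mp u.2 _).mp (mem_image_of_mem _ (mem_univ i))⟩,
        fun i j hij => (card_image_iff.mp (by rw [u.2, ht, Finset.card_univ])) (by simp) (by simp)
          (congrArg Subtype.val hij)⟩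
      invFun := fun e => ⟨Subtype.val ∘ e, by
        refine eq_of_subset_of_card_le ?_ ?_
        · intro a ha
          obtain ⟨i, -, rfl⟩ := mem_image.mp ha
          exact (e i).2
        · rw [card_image_of_injective _ (Subtype.val_injective.comp e.injective), ht,
            Finset.card_univ]⟩
      left_inv := fun u => rfl
      right_inv := fun e => rfl }
  rw [← Fintype.card_subtype, Fintype.card_congr e, Fintype.card_embedding_eq, Fintype.card_coe,
    ht, descFactorial_self]

theorem card_filter_comp_image_eq [Fintype β] (g : β → α) {t : Finset α}
    (ht : #t = Fintype.card ι) {k : ℕ} (hk : ∀ a ∈ t, Nat.card {b // g b = a} = k) :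
    #{v : ι → β | univ.image (g ∘ v) = t} = (Fintype.card ι)! * k ^ Fintype.card ι := by
  rw [← card_filter_image_univ_eq ht]
  refine card_eq_card_mul_of_card_fiber (f := (g ∘ ·)) (fun v hv => by simpa using hv) ?_
  intro u hu
  have hut : ∀ i, u i ∈ t := fun i => by
    rw [← (mem_filter.mp hu).2]; exact mem_image_of_mem _ (mem_univ i)
  have hfiber :
      ({v ∈ {v : ι → β | univ.image (g ∘ v) = t} | g ∘ v = u} : Finset (ι → β)) =
        Fintype.piFinset fun i => {b | g b = u i} := by
    ext v
    simp only [mem_filter, mem_univ, true_and, Fintype.mem_piFinset, ← funext_iff,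
      Function.comp_def]
    exact and_iff_right_of_imp fun h => h ▸ (mem_filter.mp hu).2
  rw [hfiber, Fintype.card_piFinset, prod_congr rfl fun i _ => ?_, prod_const, Finset.card_univ]
  rw [← hk (u i) (hut i), Nat.card_eq_fintype_card, Fintype.card_subtype]

end Combinatorics

section Lines

variable {F W : Type*} [Field F] [AddCommGroup W] [Module F W]

variable (F W) in
def finsetsWithFinrank (c d n : ℕ) : Set (Finset (Submodule F W)) :=
  {s | #s = c ∧ (∀ U ∈ s, finrank F U = d) ∧ finrank F ↥(s.sup id) = n}

theorem Submodule.span_singleton_eq_iff_of_finrank_eq_one {u : Submodule F W}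
    (hu : finrank F u = 1) {x : W} : F ∙ x = u ↔ x ∈ u ∧ x ≠ 0 := by
  have := Module.finite_of_finrank_eq_succ hu
  constructor
  · rintro rfl
    refine ⟨mem_span_singleton_self x, ?_⟩
    rintro rfl
    rw [span_zero_singleton, finrank_bot] at hu
    exact zero_ne_one hu
  · rintro ⟨hx, hx0⟩
    exact eq_of_le_of_finrank_le ((span_singleton_le_iff_mem x u).mpr hx)
      (by rw [finrank_span_singleton hx0, hu])

theorem Submodule.natCard_span_singleton_eq_of_finrank_eq_one [Finite F] {u : Submodule F W}
    (hu : finrank F u = 1) : Nat.card {x : W // F ∙ x = u} = Nat.card F - 1 := by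
  classical
  have := Module.finite_of_finrank_eq_succ hu
  have : Finite u := Module.finite_of_finite F
  have e : {x : W // F ∙ x = u} ≃ {y : u // y ≠ 0} :=
    (Equiv.subtypeEquivRight fun x => span_singleton_eq_iff_of_finrank_eq_one hu).trans
      (Equiv.subtypeSubtypeEquivSubtypeInter (· ∈ u) (· ≠ 0)).symm |>.trans
      (Equiv.subtypeEquivRight fun y => Submodule.coe_eq_zero.not)
  have hcard := Nat.card_congr (Equiv.optionSubtypeNe (0 : u))
  rw [Finite.card_option, natCard_eq_pow_finrank (K := F) (V := u), hu, pow_one] at hcard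
  rw [Nat.card_congr e]
  omega

theorem linearIndependent_iff_image_span_singleton_mem {ι : Type*} [Fintype ι]
    [DecidableEq (Submodule F W)] (v : ι → W) :
    LinearIndependent F v ↔ univ.image (fun i => F ∙ v i) ∈
      finsetsWithFinrank F W (Fintype.card ι) 1 (Fintype.card ι) := by
  have hsup : (univ.image fun i => F ∙ v i).sup id = span F (Set.range v) := by
    rw [sup_image, Function.id_comp, sup_univ_eq_iSup, span_range_eq_iSup]
  simp only [finsetsWithFinrank, Set.mem_ofPred_eq]
  rw [hsup]
  refine ⟨fun hv => ⟨?_, ?_, finrank_span_eq_card hv⟩, fun h => ?_⟩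
  · refine card_image_of_injective _ fun i j hij => ?_
    by_contra hne
    have h1 : v i ∉ span F (v '' {j}) := hv.notMem_span_image (by simpa using hne)
    rw [Set.image_singleton] at h1
    exact h1 (hij ▸ mem_span_singleton_self (v i))
  · simp only [mem_image, mem_univ, true_and, forall_exists_index, forall_apply_eq_imp_iff]
    exact fun i => finrank_span_singleton (hv.ne_zero i)
  · exact linearIndependent_iff_card_eq_finrank_span.mpr h.2.2.symm

theorem ncard_finsetsWithFinrank_lines_mul [Fintype F] [Finite W] {c : ℕ}
    (hc : c ≤ finrank F W) :
    (finsetsWithFinrank F W c 1 c).ncard * c ! * (Fintype.card F - 1) ^ c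
      = ∏ i ∈ range c, (Fintype.card F ^ finrank F W - Fintype.card F ^ i) := by
  classical
  have := Fintype.ofFinite W
  have : Finite (Submodule F W) := Finite.of_injective _ SetLike.coe_injective
  have := Fintype.ofFinite (Submodule F W)
  have hLI := card_linearIndependent (K := F) (V := W) hc
  rw [Nat.card_eq_fintype_card, Fintype.card_subtype, Fin.prod_univ_eq_prod_range
    (fun i => Fintype.card F ^ finrank F W - Fintype.card F ^ i)] at hLI
  rw [← hLI, Set.ncard_eq_toFinset_card', mul_assoc]
  refine (card_eq_card_mul_of_card_fiber (f := fun v : Fin c → W => univ.image fun i => F ∙ v i)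
    (fun v hv => by
      simpa [linearIndependent_iff_image_span_singleton_mem] using hv) ?_).symm
  intro t ht
  have ht' : t ∈ finsetsWithFinrank F W c 1 c := by simpa using ht
  have hfiber := card_filter_comp_image_eq (ι := Fin c) (fun x : W => F ∙ x)
    (by simpa using ht'.1)
    fun u hu => by
      rw [natCard_span_singleton_eq_of_finrank_eq_one (ht'.2.1 u hu), Nat.card_eq_fintype_card]
  rw [Fintype.card_fin] at hfiber
  rw [filter_filter, ← hfiber]
  refine congrArg card (filter_congr fun v _ => and_iff_right_of_imp fun hv => ?_)
  rwa [linearIndependent_iff_image_span_singleton_mem, hv, Fintype.card_fin]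

end Lines

section Quotient

variable {F V : Type*} [Field F] [AddCommGroup V] [Module F V] (L : Submodule F V)

theorem Submodule.comap_map_mkQ_of_le {U : Submodule F V} (h : L ≤ U) :
    (U.map L.mkQ).comap L.mkQ = U :=
  comap_map_eq_self (by rwa [ker_mkQ])

variable [FiniteDimensional F V]

theorem Submodule.finrank_map_mkQ_add_finrank {U : Submodule F V} (h : L ≤ U) :
    finrank F (U.map L.mkQ) + finrank F L = finrank F U := by
  have h1 := LinearMap.finrank_range_add_finrank_ker (L.mkQ.domRestrict U)
  rw [LinearMap.range_domRestrict, LinearMap.ker_domRestrict, ker_mkQ] at h1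
  rwa [(comapSubtypeEquivOfLe h).finrank_eq] at h1

theorem image_map_mkQ_mem_finsetsWithFinrank_iff {c d n : ℕ} (hc : 0 < c)
    {s : Finset (Submodule F V)} (hs : ∀ U ∈ s, L ≤ U) :
    s.image (map L.mkQ) ∈ finsetsWithFinrank F (V ⧸ L) c d n ↔
      s ∈ finsetsWithFinrank F V c (d + finrank F L) (n + finrank F L) := by
  classical
  have hinj : Set.InjOn (map L.mkQ) s := fun U hU U' hU' h => by
    rw [← comap_map_mkQ_of_le L (hs U hU), h, comap_map_mkQ_of_le L (hs U' hU')]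
  have hsup : (s.image (map L.mkQ)).sup id = (s.sup id).map L.mkQ := by
    rw [sup_image, Function.id_comp,
      apply_sup_eq_sup_comp _ (fun _ _ => Submodule.map_sup _ _ _) (map_bot _)]
    rfl
  simp only [finsetsWithFinrank, Set.mem_ofPred_eq]
  rw [Finset.card_image_of_injOn hinj, forall_mem_image, hsup]
  refine and_congr_right fun hsc => and_congr (forall₂_congr fun U hU => ?_) ?_
  · have := finrank_map_mkQ_add_finrank L (hs U hU)
    omega
  · obtain ⟨U, hU⟩ := card_pos.mp (hsc ▸ hc)
    have := finrank_map_mkQ_add_finrank L ((hs U hU).trans (le_sup (f := id) hU))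
    omega

theorem ncard_finsetsWithFinrank_above_eq {c d n : ℕ} (hc : 0 < c) :
    {s ∈ finsetsWithFinrank F V c (d + finrank F L) (n + finrank F L) |
        ∀ U ∈ s, L ≤ U}.ncard
      = (finsetsWithFinrank F (V ⧸ L) c d n).ncard := by
  classical
  have hmap_comap : Function.LeftInverse (image (map L.mkQ)) (image (comap L.mkQ)) := fun t => by
    rw [image_image, image_congr (f := map L.mkQ ∘ comap L.mkQ) (g := id)
      fun u _ => map_comap_eq_of_surjective (mkQ_surjective L) u, image_id]
  rw [← Set.ncard_image_of_injective _ hmap_comap.injective]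
  congr 1
  ext s
  constructor
  · rintro ⟨hs, hsL⟩
    refine ⟨s.image (map L.mkQ), (image_map_mkQ_mem_finsetsWithFinrank_iff L hc hsL).mpr hs, ?_⟩
    rw [image_image, image_congr (f := comap L.mkQ ∘ map L.mkQ) (g := id)
      fun U hU => comap_map_mkQ_of_le L (hsL U hU), image_id]
  · rintro ⟨t, ht, rfl⟩
    have hsL : ∀ U ∈ t.image (comap L.mkQ), L ≤ U :=
      forall_mem_image.mpr fun u _ => le_comap_mkQ L u
    exact ⟨(image_map_mkQ_mem_finsetsWithFinrank_iff L hc hsL).mp (by rwa [hmap_comap t]), hsL⟩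

end Quotient

theorem count_X_sets_general (q k m l : ℕ)
    (hl : 1 ≤ l) (hk : m + l ≤ k)
    (F : Type*) [Field F] [Fintype F] (hF : Fintype.card F = q)
    (V : Type*) [AddCommGroup V] [Module F V] [FiniteDimensional F V]
    (hV : Module.finrank F V = k)
    (L : Submodule F V) (hL : Module.finrank F ↥L = l - 1) :
    Set.ncard {s : Finset (Submodule F V) | s.card = m + 1 ∧
        (∀ U ∈ s, Module.finrank F ↥U = l ∧ L ≤ U) ∧
        Module.finrank F ↥(s.sup id) = m + l}
      * Nat.factorial (m + 1) * (q - 1) ^ (m + 1)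
      = q ^ (m * (m + 1) / 2) * ∏ i ∈ Finset.range (m + 1), (q ^ (k - l + 1 - i) - 1) := by
  have hQ : finrank F (V ⧸ L) = k - l + 1 := by
    have := L.finrank_quotient_add_finrank
    omega
  have : Finite (V ⧸ L) := Module.finite_of_finite F
  have hX : {s : Finset (Submodule F V) | s.card = m + 1 ∧
      (∀ U ∈ s, Module.finrank F ↥U = l ∧ L ≤ U) ∧
      Module.finrank F ↥(s.sup id) = m + l} =
      {s ∈ finsetsWithFinrank F V (m + 1) (1 + finrank F L) (m + 1 + finrank F L) |
        ∀ U ∈ s, L ≤ U} := by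
    ext s
    simp only [finsetsWithFinrank, Set.mem_ofPred_eq, forall_and, hL,
      show 1 + (l - 1) = l by omega, show m + 1 + (l - 1) = m + l by omega]
    tauto
  rw [hX, ncard_finsetsWithFinrank_above_eq L (by omega : 0 < m + 1), ← hF,
    ncard_finsetsWithFinrank_lines_mul (by omega), hQ, prod_range_pow_sub_pow _ _ _ (by omega),
    Nat.add_sub_cancel, mul_comm (m + 1)]

/-- In a `k`-dim space over `F_q` with a fixed `(l−1)`-dim subspace `L` and `k ≥ m + l`,
the number of `(m+1)`-element sets `{U_1,…,U_{m+1}}` of `l`-dim subspaces, each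
containing `L`, with `dim(U_1 + ⋯ + U_{m+1}) = m + l`, equals
`(q^{m(m+1)/2}/(m+1)!) · ∏_{i=0}^{m} (q^{k−l+1−i} − 1)/(q − 1)`
(stated in cross-multiplied form). -/
theorem count_X_sets (q k m l : ℕ) (hq : IsPrimePow q)
    (hm : 1 ≤ m) (hl : 1 ≤ l) (hk : m + l ≤ k)
    (F : Type*) [Field F] [Fintype F] (hF : Fintype.card F = q)
    (V : Type*) [AddCommGroup V] [Module F V] [FiniteDimensional F V]
    (hV : Module.finrank F V = k)
    (L : Submodule F V) (hL : Module.finrank F ↥L = l - 1) :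
    Set.ncard {s : Finset (Submodule F V) | s.card = m + 1 ∧
        (∀ U ∈ s, Module.finrank F ↥U = l ∧ L ≤ U) ∧
        Module.finrank F ↥(s.sup id) = m + l}
      * Nat.factorial (m + 1) * (q - 1) ^ (m + 1)
      = q ^ (m * (m + 1) / 2) * ∏ i ∈ Finset.range (m + 1), (q ^ (k - l + 1 - i) - 1) :=
  count_X_sets_general q k m l hl hk F hF V hV L hL
end

section
/- Let q be a prime power and let m_r, l_r, t_T, k_r be positive integers with k_r ≥ m_r + l_r + t_T. Let V be a k_r-dimensional vector space over F_q, let L be a fixed (l_r − 1)-dimensional subspace of V, and let Q be a fixed (m_r + l_r + 1)-dimensional subspace of V with L ⊆ Q. Then the number of (t_T − 1)-element sets {V_1, …, V_{t_T−1}} of l_r-dimensional subspaces of V, each containing L, such that dim(Q + V_1 + ⋯ + V_{t_T−1}) = m_r + l_r + t_T, equals (q^{(t_T + 2m_r + 2)(t_T − 1)/2}/(t_T − 1)!) · ∏_{i=1}^{t_T−1} (q^{k_r − m_r − l_r − i} − 1)/(q − 1). -/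
/-!
Subspaces `W ⊇ L` with `dim W = dim L + 1` are the points of the projective space of `V ⧸ L`, and
a set `s` of them is counted iff `Q ⊔ ⋃ s` has the largest possible dimension `dim Q + #s`. Such a
set extends by one more point `W` exactly when `W ⊄ Y := Q ⊔ ⋃ s`. Those `W` are counted through
the vectors outside `Y`: `v ↦ L ⊔ ⟨v⟩` maps them onto these points, with fibre `W \ L` of size
`q^l (q - 1)` over `W` (`l = dim L`, `k = dim V`), so there are
`q^{dim Y - l} (q^{k - dim Y} - 1) / (q - 1)` of them.
Double counting the pairs `s ⊂ t` of admissible sets of sizes `n` and `n + 1` then gives the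
recursion `N_{n+1} (n + 1) (q - 1) = N_n q^{dim Q + n - l} (q^{k - dim Q - n} - 1)`.
-/

open Module Finset

open scoped Classical

namespace Submodule

variable {F V : Type*} [DivisionRing F] [AddCommGroup V] [Module F V]

instance finite_of_finite [Finite V] : Finite (Submodule F V) :=
  Finite.of_injective _ SetLike.coe_injective

section FiniteDimensional

variable [FiniteDimensional F V]

theorem finrank_sup_le_succ {L Y W : Submodule F V} (hLY : L ≤ Y) (hLW : L ≤ W)
    (hW : finrank F W = finrank F L + 1) : finrank F ↥(Y ⊔ W) ≤ finrank F Y + 1 := by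
  have := finrank_sup_add_finrank_inf_eq Y W
  have := finrank_mono (le_inf hLY hLW)
  omega

theorem finrank_sup_eq_succ {L Y W : Submodule F V} (hLY : L ≤ Y) (hLW : L ≤ W)
    (hW : finrank F W = finrank F L + 1) (hWY : ¬ W ≤ Y) :
    finrank F ↥(Y ⊔ W) = finrank F Y + 1 :=
  le_antisymm (finrank_sup_le_succ hLY hLW hW)
    (finrank_lt_finrank_of_lt (left_lt_sup.2 hWY))

end FiniteDimensional

variable [Fintype (Submodule F V)]

noncomputable def covers (L : Submodule F V) : Finset (Submodule F V) :=
  {W | finrank F W = finrank F L + 1 ∧ L ≤ W}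

theorem mem_covers {L W : Submodule F V} :
    W ∈ covers L ↔ finrank F W = finrank F L + 1 ∧ L ≤ W := by
  simp [covers]

noncomputable def indepCovers (L Q : Submodule F V) (n : ℕ) : Finset (Finset (Submodule F V)) :=
  {s ∈ (covers L).powersetCard n | finrank F ↥(Q ⊔ s.sup id) = finrank F Q + n}

theorem mem_indepCovers {L Q : Submodule F V} {n : ℕ} {s : Finset (Submodule F V)} :
    s ∈ indepCovers L Q n ↔
      s ⊆ covers L ∧ #s = n ∧ finrank F ↥(Q ⊔ s.sup id) = finrank F Q + n := by
  simp [indepCovers, and_assoc]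

variable [FiniteDimensional F V]

theorem finrank_sup_finsetSup_le {L X : Submodule F V} (hLX : L ≤ X) {s : Finset (Submodule F V)}
    (hs : s ⊆ covers L) : finrank F ↥(X ⊔ s.sup id) ≤ finrank F X + #s := by
  induction s using Finset.induction with
  | empty => rw [Finset.sup_empty, _root_.sup_bot_eq, card_empty, add_zero]
  | insert W s hWs ih =>
    obtain ⟨hW, hLW⟩ := mem_covers.1 (hs (mem_insert_self W s))
    have := finrank_sup_le_succ (le_sup_left.trans' hLX : L ≤ X ⊔ s.sup id) hLW hW
    rw [sup_insert, id, sup_left_comm, sup_comm W, card_insert_of_notMem hWs]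
    have := ih ((subset_insert W s).trans hs)
    omega

theorem mem_indepCovers_of_subset {L Q : Submodule F V} (hLQ : L ≤ Q) {m : ℕ}
    {s t : Finset (Submodule F V)} (ht : t ∈ indepCovers L Q m) (hst : s ⊆ t) :
    s ∈ indepCovers L Q #s := by
  obtain ⟨htL, rfl, htQ⟩ := mem_indepCovers.1 ht
  have hsL := hst.trans htL
  have hs := finrank_sup_finsetSup_le hLQ hsL
  have hts := finrank_sup_finsetSup_le (le_sup_left.trans' hLQ : L ≤ Q ⊔ s.sup id)
    (sdiff_subset.trans htL : t \ s ⊆ covers L)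
  rw [sup_assoc, ← sup_union, union_sdiff_of_subset hst, htQ, card_sdiff_of_subset hst] at hts
  have := card_le_card hst
  exact mem_indepCovers.2 ⟨hsL, rfl, by omega⟩

theorem insert_mem_indepCovers_iff {L Q : Submodule F V} {n : ℕ} {s : Finset (Submodule F V)}
    (hs : s ∈ indepCovers L Q n) {W : Submodule F V} (hW : W ∈ covers L) (hLQ : L ≤ Q) :
    insert W s ∈ indepCovers L Q (n + 1) ↔ ¬ W ≤ Q ⊔ s.sup id := by
  obtain ⟨hsL, hsn, hsQ⟩ := mem_indepCovers.1 hs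
  rw [mem_indepCovers, sup_insert, id, sup_left_comm, sup_comm W]
  constructor
  · rintro ⟨-, -, h⟩ hWY
    rw [sup_eq_left.2 hWY] at h
    omega
  · intro hWY
    have hWs : W ∉ s := fun h => hWY (le_sup_right.trans' (le_sup (f := id) h))
    obtain ⟨hWdim, hLW⟩ := mem_covers.1 hW
    refine ⟨insert_subset hW hsL, by rw [card_insert_of_notMem hWs, hsn], ?_⟩
    rw [finrank_sup_eq_succ (le_sup_left.trans' hLQ) hLW hWdim hWY, hsQ, add_assoc]

section Counting

variable [Fintype F] [Fintype V]

local notation "q" => Fintype.card F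

omit [Fintype (Submodule F V)] [FiniteDimensional F V] in
theorem card_filter_mem_and_notMem {L W : Submodule F V} (hLW : L ≤ W) :
    #{v | v ∈ W ∧ v ∉ L} = q ^ finrank F W - q ^ finrank F L := by
  have card_filter_mem (U : Submodule F V) : #{v | v ∈ U} = q ^ finrank F U := by
    rw [← Fintype.card_subtype, ← card_eq_pow_finrank]
  rw [filter_and_not, card_sdiff_of_subset (monotone_filter_right _ fun v _ => @hLW v),
    card_filter_mem, card_filter_mem]

theorem card_covers_not_le_mul {L Y : Submodule F V} (hLY : L ≤ Y) :
    #{W ∈ covers L | ¬ W ≤ Y} * (q ^ finrank F L * (q - 1)) =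
      q ^ finrank F V - q ^ finrank F Y := by
  have hmaps : ∀ v ∈ ({v | v ∉ Y} : Finset V), L ⊔ F ∙ v ∈ {W ∈ covers L | ¬ W ≤ Y} := by
    intro v hv
    rw [mem_filter_univ] at hv
    exact mem_filter.2 ⟨mem_covers.2 ⟨finrank_sup_span_singleton fun h => hv (hLY h),
      le_sup_left⟩, fun h => hv (h (mem_sup_right (mem_span_singleton_self v)))⟩
  have hfiber : ∀ W ∈ ({W ∈ covers L | ¬ W ≤ Y} : Finset _),
      #(({v | v ∉ Y} : Finset V).filter (fun v => L ⊔ F ∙ v = W)) =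
        q ^ finrank F L * (q - 1) := by
    intro W hW
    obtain ⟨hW, hWY⟩ := mem_filter.1 hW
    obtain ⟨hWdim, hLW⟩ := mem_covers.1 hW
    have hfiber_eq : ({v | v ∉ Y} : Finset V).filter (fun v => L ⊔ F ∙ v = W) =
        ({v | v ∈ W ∧ v ∉ L} : Finset V) := by
      ext v
      simp only [mem_filter, mem_univ, true_and]
      constructor
      · rintro ⟨hvY, rfl⟩
        exact ⟨mem_sup_right (mem_span_singleton_self v), fun h => hvY (hLY h)⟩
      · rintro ⟨hvW, hvL⟩
        have hsup : L ⊔ F ∙ v = W := eq_of_le_of_finrank_eq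
          (sup_le hLW ((span_singleton_le_iff_mem v W).2 hvW))
          (by rw [finrank_sup_span_singleton hvL, hWdim])
        exact ⟨fun hvY => hWY (hsup ▸ sup_le hLY ((span_singleton_le_iff_mem v Y).2 hvY)), hsup⟩
    rw [hfiber_eq, card_filter_mem_and_notMem hLW, hWdim, pow_succ, Nat.mul_sub_one]
  have hcomplement : #({v | v ∉ Y} : Finset V) =
      q ^ finrank F V - q ^ finrank F Y := by
    simpa [finrank_top] using card_filter_mem_and_notMem (le_top : Y ≤ ⊤)
  rw [← hcomplement, card_eq_sum_card_fiberwise hmaps, sum_congr rfl hfiber, sum_const, smul_eq_mul]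

theorem card_covers_not_le_mul_sub_one {L Y : Submodule F V} (hLY : L ≤ Y) :
    #{W ∈ covers L | ¬ W ≤ Y} * (q - 1) =
      q ^ (finrank F Y - finrank F L) * (q ^ (finrank F V - finrank F Y) - 1) := by
  have hLY' := finrank_mono hLY
  have hYV := finrank_le Y
  refine Nat.eq_of_mul_eq_mul_left (pow_pos (Fintype.card_pos (α := F)) (finrank F L)) ?_
  calc q ^ finrank F L * (#{W ∈ covers L | ¬ W ≤ Y} * (q - 1))
      = #{W ∈ covers L | ¬ W ≤ Y} * (q ^ finrank F L * (q - 1)) := by ring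
    _ = q ^ finrank F V - q ^ finrank F Y := card_covers_not_le_mul hLY
    _ = q ^ finrank F L *
          (q ^ (finrank F Y - finrank F L) * (q ^ (finrank F V - finrank F Y) - 1)) := by
      rw [← mul_assoc, ← pow_add, Nat.mul_sub_one, ← pow_add, Nat.add_sub_cancel' hLY',
        Nat.add_sub_cancel' hYV]

theorem card_indepCovers_succ_mul {L Q : Submodule F V} (hLQ : L ≤ Q) (n : ℕ) :
    #(indepCovers L Q (n + 1)) * (n + 1) * (q - 1) = #(indepCovers L Q n) *
      (q ^ (finrank F Q + n - finrank F L) * (q ^ (finrank F V - (finrank F Q + n)) - 1)) := by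
  have hbelow : ∀ t ∈ indepCovers L Q (n + 1),
      #((indepCovers L Q n).bipartiteBelow (· ⊆ ·) t) = n + 1 := by
    intro t ht
    have : (indepCovers L Q n).bipartiteBelow (· ⊆ ·) t = t.powersetCard n := by
      ext s
      rw [mem_bipartiteBelow, mem_powersetCard]
      constructor
      · rintro ⟨hs, hst⟩
        exact ⟨hst, (mem_indepCovers.1 hs).2.1⟩
      · rintro ⟨hst, rfl⟩
        exact ⟨mem_indepCovers_of_subset hLQ ht hst, hst⟩
    rw [this, card_powersetCard, (mem_indepCovers.1 ht).2.1, Nat.choose_succ_self_right]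
  have habove : ∀ s ∈ indepCovers L Q n,
      #((indepCovers L Q (n + 1)).bipartiteAbove (· ⊆ ·) s) * (q - 1) =
        q ^ (finrank F Q + n - finrank F L) * (q ^ (finrank F V - (finrank F Q + n)) - 1) := by
    intro s hs
    obtain ⟨hsL, hsn, hsQ⟩ := mem_indepCovers.1 hs
    have : (indepCovers L Q (n + 1)).bipartiteAbove (· ⊆ ·) s =
        {W ∈ covers L | ¬ W ≤ Q ⊔ s.sup id}.image (insert · s) := by
      ext t
      rw [mem_bipartiteAbove, mem_image]
      constructor
      · rintro ⟨ht, hst⟩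
        obtain ⟨htL, htn, -⟩ := mem_indepCovers.1 ht
        obtain ⟨W, hWs, rfl⟩ := exists_eq_insert_iff.2 ⟨hst, by rw [hsn, htn]⟩
        have hW := htL (mem_insert_self W s)
        exact ⟨W, mem_filter.2 ⟨hW, (insert_mem_indepCovers_iff hs hW hLQ).1 ht⟩, rfl⟩
      · rintro ⟨W, hW, rfl⟩
        obtain ⟨hW, hWY⟩ := mem_filter.1 hW
        exact ⟨(insert_mem_indepCovers_iff hs hW hLQ).2 hWY, subset_insert W s⟩
    rw [this, card_image_of_injOn, card_covers_not_le_mul_sub_one (le_sup_left.trans' hLQ), hsQ]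
    intro W hW W' _ h
    exact (insert_inj fun hWs =>
      (mem_filter.1 hW).2 (le_sup_right.trans' (le_sup (f := id) hWs))).1 h
  calc #(indepCovers L Q (n + 1)) * (n + 1) * (q - 1)
      = (∑ s ∈ indepCovers L Q n,
          #((indepCovers L Q (n + 1)).bipartiteAbove (· ⊆ ·) s)) * (q - 1) := by
        rw [sum_card_bipartiteAbove_eq_sum_card_bipartiteBelow, sum_congr rfl hbelow, sum_const,
          smul_eq_mul]
    _ = _ := by rw [sum_mul, sum_congr rfl habove, sum_const, smul_eq_mul]

theorem card_indepCovers_mul {L Q : Submodule F V} (hLQ : L ≤ Q) (n : ℕ) :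
    #(indepCovers L Q n) * n.factorial * (q - 1) ^ n = ∏ i ∈ range n,
      q ^ (finrank F Q + i - finrank F L) * (q ^ (finrank F V - (finrank F Q + i)) - 1) := by
  induction n with
  | zero =>
    have : indepCovers L Q 0 = {∅} := by
      ext s
      rw [mem_indepCovers, card_eq_zero, mem_singleton]
      refine ⟨fun h => h.2.1, ?_⟩
      rintro rfl
      exact ⟨empty_subset _, rfl, by rw [Finset.sup_empty, _root_.sup_bot_eq, add_zero]⟩
    simp [this]
  | succ n ih =>
    calc #(indepCovers L Q (n + 1)) * (n + 1).factorial * (q - 1) ^ (n + 1)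
        = #(indepCovers L Q (n + 1)) * (n + 1) * (q - 1) * (n.factorial * (q - 1) ^ n) := by
          rw [Nat.factorial_succ, pow_succ]
          ring
      _ = #(indepCovers L Q n) * n.factorial * (q - 1) ^ n * (q ^ (finrank F Q + n - finrank F L) *
            (q ^ (finrank F V - (finrank F Q + n)) - 1)) := by
          rw [card_indepCovers_succ_mul hLQ]
          ring
      _ = _ := by rw [ih, prod_range_succ]

end Counting

end Submodule

theorem count_packets_general (q mr lr tT kr : ℕ)
    (hlr : 1 ≤ lr) (htT : 1 ≤ tT)
    (F : Type*) [Field F] [Fintype F] (hF : Fintype.card F = q)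
    (V : Type*) [AddCommGroup V] [Module F V] [FiniteDimensional F V]
    (hV : Module.finrank F V = kr)
    (L Q : Submodule F V) (hLQ : L ≤ Q)
    (hL : Module.finrank F ↥L = lr - 1)
    (hQ : Module.finrank F ↥Q = mr + lr + 1) :
    Set.ncard {s : Finset (Submodule F V) | s.card = tT - 1 ∧
        (∀ W ∈ s, Module.finrank F ↥W = lr ∧ L ≤ W) ∧
        Module.finrank F ↥(Q ⊔ s.sup id) = mr + lr + tT}
      * Nat.factorial (tT - 1) * (q - 1) ^ (tT - 1)
      = q ^ ((tT + 2 * mr + 2) * (tT - 1) / 2)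
        * ∏ i ∈ Finset.Icc 1 (tT - 1), (q ^ (kr - mr - lr - i) - 1) := by
  have : Finite V := Module.finite_of_finite F
  have : Fintype V := Fintype.ofFinite V
  have : Fintype (Submodule F V) := Fintype.ofFinite _
  obtain ⟨n, rfl⟩ : ∃ n, tT = n + 1 := ⟨tT - 1, by omega⟩
  have hpackets : {s : Finset (Submodule F V) | s.card = n + 1 - 1 ∧
      (∀ W ∈ s, finrank F W = lr ∧ L ≤ W) ∧ finrank F ↥(Q ⊔ s.sup id) = mr + lr + (n + 1)} =
      Submodule.indepCovers L Q n := by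
    ext s
    simp only [Set.mem_ofPred_eq, mem_coe, Submodule.mem_indepCovers, subset_iff,
      Submodule.mem_covers, hL, hQ, Nat.sub_add_cancel hlr, add_tsub_cancel_right]
    rw [show mr + lr + 1 + n = mr + lr + (n + 1) by omega]
    tauto
  have hexponent : (n + 1 + 2 * mr + 2) * n / 2 = ∑ i ∈ range n, (mr + 2 + i) := by
    refine Nat.div_eq_of_eq_mul_left two_pos ?_
    rw [sum_add_distrib, sum_const, card_range, smul_eq_mul, add_mul _ (∑ i ∈ range n, i),
      sum_range_id_mul_two]
    cases n with
    | zero => simp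
    | succ m => simp only [add_tsub_cancel_right]; ring
  rw [hpackets, Set.ncard_coe_finset, Nat.add_sub_cancel, ← hF,
    Submodule.card_indepCovers_mul hLQ, prod_mul_distrib, prod_pow_eq_pow_sum, hexponent,
    ← Finset.Ico_add_one_right_eq_Icc, prod_Ico_eq_prod_range, Nat.add_sub_cancel, hQ, hL, hV]
  congr 2
  · refine sum_congr rfl fun i _ => ?_
    omega
  · funext i
    congr 2
    omega

/-- Count of the packets `F_P`: in a `k_r`-dim space over `F_q` with a fixed
`(l_r−1)`-dim subspace `L` and a fixed `(m_r+l_r+1)`-dim subspace `Q ⊇ L`,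
the number of `(t_T−1)`-element sets `{V_1,…,V_{t_T−1}}` of `l_r`-dim subspaces,
each containing `L`, with `dim(Q + V_1 + ⋯ + V_{t_T−1}) = m_r + l_r + t_T`, equals
`(q^{(t_T+2m_r+2)(t_T−1)/2}/(t_T−1)!) · ∏_{i=1}^{t_T−1} (q^{k_r−m_r−l_r−i} − 1)/(q−1)`
(stated in cross-multiplied form). -/
theorem count_packets (q mr lr tT kr : ℕ) (hq : IsPrimePow q)
    (hmr : 1 ≤ mr) (hlr : 1 ≤ lr) (htT : 1 ≤ tT) (hkr : mr + lr + tT ≤ kr)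
    (F : Type*) [Field F] [Fintype F] (hF : Fintype.card F = q)
    (V : Type*) [AddCommGroup V] [Module F V] [FiniteDimensional F V]
    (hV : Module.finrank F V = kr)
    (L Q : Submodule F V) (hLQ : L ≤ Q)
    (hL : Module.finrank F ↥L = lr - 1)
    (hQ : Module.finrank F ↥Q = mr + lr + 1) :
    Set.ncard {s : Finset (Submodule F V) | s.card = tT - 1 ∧
        (∀ W ∈ s, Module.finrank F ↥W = lr ∧ L ≤ W) ∧
        Module.finrank F ↥(Q ⊔ s.sup id) = mr + lr + tT}
      * Nat.factorial (tT - 1) * (q - 1) ^ (tT - 1)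
      = q ^ ((tT + 2 * mr + 2) * (tT - 1) / 2)
        * ∏ i ∈ Finset.Icc 1 (tT - 1), (q ^ (kr - mr - lr - i) - 1) :=
  count_packets_general q mr lr tT kr hlr htT F hF V hV L Q hLQ hL hQ
end

section
/- Let q be a prime power and let a, f, b be positive integers with a ≥ f ≥ b. Then q^{(a−f−1)b} ≤ [a choose b]_q / [f choose b]_q ≤ q^{(a−f+1)b}, where the quotient is taken in the rationals (or reals) and q raised to a possibly negative integer exponent is interpreted accordingly. -/
/-!
Cancelling the common denominator `(q^b - 1)⋯(q - 1)`, the quotient is the product over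
`i < b` of `(q^(a-i) - 1) / (q^(f-i) - 1)`, and each factor lies between `q^(a-f)` and
`q^(a-f+1)`: for `n ≤ m` one has `q^(m-n) (q^n - 1) ≤ q^m - 1`, while
`q^m - 1 < q^m (q - 1) ≤ q^(m-n+1) (q^n - 1)` once `q ≥ 2`.
-/

/-- The Gaussian binomial coefficient
`[a choose b]_q = ((q^a − 1)(q^{a−1} − 1)⋯(q^{a−b+1} − 1)) / ((q^b − 1)⋯(q − 1))`,
as a rational number. -/
def gaussBinom (q a b : ℕ) : ℚ :=
  (∏ i ∈ Finset.range b, ((q : ℚ) ^ (a - i) - 1)) /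
    (∏ i ∈ Finset.range b, ((q : ℚ) ^ (b - i) - 1))

open Finset

section PowSubOne

variable {K : Type*} [Field K] [LinearOrder K] [IsStrictOrderedRing K] {q : K} {m n : ℕ}

lemma pow_sub_one_pos (hq : 1 < q) (hn : n ≠ 0) : 0 < q ^ n - 1 :=
  sub_pos.2 (one_lt_pow₀ hq hn)

lemma pow_sub_le_div_pow_sub_one (hq : 1 < q) (hn : n ≠ 0) (hnm : n ≤ m) :
    q ^ (m - n) ≤ (q ^ m - 1) / (q ^ n - 1) := by
  obtain ⟨k, rfl⟩ := Nat.exists_eq_add_of_le hnm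
  rw [Nat.add_sub_cancel_left, le_div_iff₀ (pow_sub_one_pos hq hn), pow_add]
  nlinarith [one_le_pow₀ (n := k) hq.le]

lemma div_pow_sub_one_le_pow_sub_add_one (hq : 2 ≤ q) (hn : n ≠ 0) (hnm : n ≤ m) :
    (q ^ m - 1) / (q ^ n - 1) ≤ q ^ (m - n + 1) := by
  obtain ⟨k, rfl⟩ := Nat.exists_eq_add_of_le hnm
  have hqn : q ≤ q ^ n := le_self_pow₀ (by linarith) hn
  have hprod : 1 ≤ (q - 1) * (q ^ n - 1) := by nlinarith
  rw [Nat.add_sub_cancel_left, div_le_iff₀ (pow_sub_one_pos (by linarith) hn), pow_add,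
    pow_succ]
  nlinarith [mul_nonneg (pow_pos (show 0 < q by linarith) k).le (sub_nonneg.2 hprod)]

end PowSubOne

lemma gaussBinom_div_gaussBinom {q : ℕ} (hq : 1 < q) (a f b : ℕ) :
    gaussBinom q a b / gaussBinom q f b =
      ∏ i ∈ range b, (((q : ℚ) ^ (a - i) - 1) / ((q : ℚ) ^ (f - i) - 1)) := by
  have hden : ∏ i ∈ range b, ((q : ℚ) ^ (b - i) - 1) ≠ 0 :=
    prod_ne_zero_iff.2 fun i hi =>
      (pow_sub_one_pos (by exact_mod_cast hq) (by simp at hi; omega)).ne'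
  rw [gaussBinom, gaussBinom, div_div_div_cancel_right₀ hden, prod_div_distrib]

section Ratio

variable {q a f b : ℕ}

lemma pow_le_gaussBinom_div_gaussBinom (hq : 1 < q) (hfb : b ≤ f) (haf : f ≤ a) :
    (q : ℚ) ^ ((a - f) * b) ≤ gaussBinom q a b / gaussBinom q f b := by
  rw [gaussBinom_div_gaussBinom hq, pow_mul]
  conv_lhs => rw [← card_range b, ← prod_const]
  refine prod_le_prod (fun _ _ => by positivity) fun i hi => ?_
  rw [mem_range] at hi
  have hexp : a - f = (a - i) - (f - i) := by omega
  rw [hexp]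
  exact pow_sub_le_div_pow_sub_one (by exact_mod_cast hq) (by omega) (by omega)

lemma gaussBinom_div_gaussBinom_le_pow (hq : 2 ≤ q) (hfb : b ≤ f) (haf : f ≤ a) :
    gaussBinom q a b / gaussBinom q f b ≤ (q : ℚ) ^ ((a - f + 1) * b) := by
  have hq' : (2 : ℚ) ≤ q := by exact_mod_cast hq
  rw [gaussBinom_div_gaussBinom hq, pow_mul]
  conv_rhs => rw [← card_range b, ← prod_const]
  refine prod_le_prod (fun i hi => ?_) fun i hi => ?_ <;> rw [mem_range] at hi
  · exact (div_pos (pow_sub_one_pos (by linarith) (by omega))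
      (pow_sub_one_pos (by linarith) (by omega))).le
  · have hexp : a - f = (a - i) - (f - i) := by omega
    rw [hexp]
    exact div_pow_sub_one_le_pow_sub_add_one hq' (by omega) (by omega)

end Ratio

theorem gaussBinom_ratio_bounds_general (q a f b : ℕ) (hq : IsPrimePow q)
    (hfb : b ≤ f) (haf : f ≤ a) :
    (q : ℚ) ^ (((a : ℤ) - f - 1) * b) ≤ gaussBinom q a b / gaussBinom q f b ∧
      gaussBinom q a b / gaussBinom q f b ≤ (q : ℚ) ^ (((a : ℤ) - f + 1) * b) := by
  have hq2 : 2 ≤ q := hq.two_le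
  have hq1 : (1 : ℚ) ≤ q := by exact_mod_cast hq2.trans' one_le_two
  have hcast : ((a - f : ℕ) : ℤ) = a - f := by omega
  constructor
  · calc (q : ℚ) ^ (((a : ℤ) - f - 1) * b)
        ≤ (q : ℚ) ^ (((a - f) * b : ℕ) : ℤ) :=
          zpow_le_zpow_right₀ hq1 (by push_cast [hcast]; nlinarith)
      _ ≤ _ := by
          rw [zpow_natCast]
          exact pow_le_gaussBinom_div_gaussBinom hq2 hfb haf
  · calc gaussBinom q a b / gaussBinom q f b ≤ (q : ℚ) ^ ((a - f + 1) * b) :=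
          gaussBinom_div_gaussBinom_le_pow hq2 hfb haf
      _ = (q : ℚ) ^ (((a : ℤ) - f + 1) * b) := by
          rw [← zpow_natCast]
          push_cast [hcast]
          rfl

/-- For a prime power `q` and `a ≥ f ≥ b ≥ 1`:
`q^{(a−f−1)b} ≤ [a choose b]_q / [f choose b]_q ≤ q^{(a−f+1)b}`,
with integer (possibly negative) exponents interpreted in `ℚ`. -/
theorem gaussBinom_ratio_bounds (q a f b : ℕ) (hq : IsPrimePow q)
    (hb : 1 ≤ b) (hfb : b ≤ f) (haf : f ≤ a) :
    (q : ℚ) ^ (((a : ℤ) - f - 1) * b) ≤ gaussBinom q a b / gaussBinom q f b ∧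
      gaussBinom q a b / gaussBinom q f b ≤ (q : ℚ) ^ (((a : ℤ) - f + 1) * b) :=
  gaussBinom_ratio_bounds_general q a f b hq hfb haf
end
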